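/- arXiv:1905.13680 — 5 statements merged into one kernel-verified Lean document; each statement's English description precedes it below -/
import Mathlib

section
/- If the 6-tuple (ξ₁, ξ₂, ξ₃, ξ₄, ξ₅, ξ₆) satisfies the resonance condition, then φ(ξ₁, ξ₂, ξ₃, ξ₄, ξ₅, ξ₆) = 0. -/
open scoped Classical BigOperators ENNReal

noncomputable section

/-- The frequencies `α_{m,j} : α_{1,j} = 2π(3k + j/L)`, `α_{2,j} = 2π(k + j/L)`,
`α_{3,j} = 2π j/L`, `α_{4,j} = 2π(4k + j/L)`. -/
def alph (k : ℝ) (L : ℕ) (m : ℕ) (j : ℤ) : ℝ :=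
  match m with
  | 1 => 2 * Real.pi * (3 * k + (j : ℝ) / (L : ℝ))
  | 2 => 2 * Real.pi * (k + (j : ℝ) / (L : ℝ))
  | 3 => 2 * Real.pi * ((j : ℝ) / (L : ℝ))
  | 4 => 2 * Real.pi * (4 * k + (j : ℝ) / (L : ℝ))
  | _ => 0

/-- `ℛ_m = {α_{m,j} : 0 ≤ j < L}`. -/
def Rmset (k : ℝ) (L : ℕ) (m : ℕ) : Finset ℝ :=
  (Finset.range L).image fun j => alph k L m (j : ℤ)

/-- `ℛ = ℛ₁ ∪ ℛ₂ ∪ ℛ₃ ∪ ℛ₄`. -/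
def Rset (k : ℝ) (L : ℕ) : Finset ℝ :=
  Rmset k L 1 ∪ Rmset k L 2 ∪ Rmset k L 3 ∪ Rmset k L 4

/-- The resonance condition on a 6-tuple of frequencies. -/
def Resonant (k : ℝ) (L : ℕ) (ξ₁ ξ₂ ξ₃ ξ₄ ξ₅ ξ₆ : ℝ) : Prop :=
  ξ₁ + ξ₃ + ξ₅ = ξ₂ + ξ₄ + ξ₆ ∧
  ∃ m₁ m₂ m₃ m₄ : ℕ,
    ((m₁ = 1 ∧ m₃ = 3 ∧ m₂ = 2 ∧ m₄ = 4) ∨ (m₁ = 2 ∧ m₃ = 4 ∧ m₂ = 1 ∧ m₄ = 3)) ∧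
    ∃ j₁ j₂ j₃ j₄ j₅ j₆ : ℤ,
      ({ξ₁, ξ₃, ξ₅} : Multiset ℝ) = {alph k L m₁ j₁, alph k L m₁ j₃, alph k L m₃ j₅} ∧
      ({ξ₂, ξ₄, ξ₆} : Multiset ℝ) = {alph k L m₂ j₂, alph k L m₂ j₄, alph k L m₄ j₆} ∧
      ({j₁, j₃} : Multiset ℤ) = ({j₂, j₄} : Multiset ℤ) ∧
      j₅ = j₆ ∧ 2 * j₅ = j₁ + j₃ ∧ 2 * j₆ = j₂ + j₄

/-- The tuples `(ξ₁,ξ₂,ξ₃,ξ₄,ξ₅) ∈ ℛ⁵` which are in resonance with `ξ`. -/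
def resTuples (k : ℝ) (L : ℕ) (ξ : ℝ) : Finset (ℝ × ℝ × ℝ × ℝ × ℝ) :=
  (Rset k L ×ˢ Rset k L ×ˢ Rset k L ×ˢ Rset k L ×ˢ Rset k L).filter
    fun p => Resonant k L p.1 p.2.1 p.2.2.1 p.2.2.2.1 p.2.2.2.2 ξ

/-- The resonance function `φ(ξ₁,…,ξ₆) = ξ₁² − ξ₂² + ξ₃² − ξ₄² + ξ₅² − ξ₆²`. -/
def phi6 (ξ₁ ξ₂ ξ₃ ξ₄ ξ₅ ξ₆ : ℝ) : ℝ :=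
  ξ₁ ^ 2 - ξ₂ ^ 2 + ξ₃ ^ 2 - ξ₄ ^ 2 + ξ₅ ^ 2 - ξ₆ ^ 2

lemma sq3sum {a b c d e f : ℝ} (h : ({a,b,c} : Multiset ℝ) = {d,e,f}) :
    a^2 + b^2 + c^2 = d^2 + e^2 + f^2 := by
  have := congrArg (fun s : Multiset ℝ => (s.map (fun x => x^2)).sum) h
  simpa [add_assoc] using this

lemma sq2sum {a b c d : ℤ} (h : ({a,b} : Multiset ℤ) = {c,d}) :
    a^2 + b^2 = c^2 + d^2 := by
  have := congrArg (fun s : Multiset ℤ => (s.map (fun x => x^2)).sum) h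
  simpa using this

/-- If a 6-tuple satisfies the resonance condition then `φ = 0`. -/
theorem stmt_3 (L : ℕ) (k : ℝ) (hL : 0 < L) (hk : ∃ K : ℕ, (K : ℝ) = (L : ℝ) * k)
    (ξ₁ ξ₂ ξ₃ ξ₄ ξ₅ ξ₆ : ℝ) (h : Resonant k L ξ₁ ξ₂ ξ₃ ξ₄ ξ₅ ξ₆) :
    phi6 ξ₁ ξ₂ ξ₃ ξ₄ ξ₅ ξ₆ = 0 := by
  obtain ⟨-, m₁, m₂, m₃, m₄, hm, j₁, j₂, j₃, j₄, j₅, j₆, h135, h246, hj, hj56, h5, h6⟩ := h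
  have hL' : (L : ℝ) ≠ 0 := Nat.cast_ne_zero.mpr hL.ne'
  subst hj56
  have c3 : ((j₁:ℝ))^2 + (j₃:ℝ)^2 = (j₂:ℝ)^2 + (j₄:ℝ)^2 := by exact_mod_cast sq2sum hj
  have c1 : (2:ℝ) * (j₅:ℝ) = (j₁:ℝ) + (j₃:ℝ) := by exact_mod_cast h5
  have c2 : (2:ℝ) * (j₅:ℝ) = (j₂:ℝ) + (j₄:ℝ) := by exact_mod_cast h6
  have hodd := sq3sum h135
  have heven := sq3sum h246
  have : phi6 ξ₁ ξ₂ ξ₃ ξ₄ ξ₅ ξ₆ =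
      (ξ₁^2 + ξ₃^2 + ξ₅^2) - (ξ₂^2 + ξ₄^2 + ξ₆^2) := by unfold phi6; ring
  rw [this, hodd, heven]
  rcases hm with ⟨rfl, rfl, rfl, rfl⟩ | ⟨rfl, rfl, rfl, rfl⟩
  · simp only [alph]
    field_simp
    linear_combination (-(24:ℝ) * k * (L:ℝ) * Real.pi^2) * c1 +
      ((8:ℝ) * k * (L:ℝ) * Real.pi^2) * c2 + ((4:ℝ) * Real.pi^2) * c3
  · simp only [alph]
    field_simp
    linear_combination (-(8:ℝ) * k * (L:ℝ) * Real.pi^2) * c1 +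
      ((24:ℝ) * k * (L:ℝ) * Real.pi^2) * c2 + ((4:ℝ) * Real.pi^2) * c3
end
end

section
/- Let (I_{ℛ₁}(t), I_{ℛ₂}(t), I_{ℛ₃}(t), I_{ℛ₄}(t)) be a differentiable solution of the averaged system (RA) with nonnegative components on an interval. Then the quantities I_{ℛ₁}(t) + I_{ℛ₂}(t) + I_{ℛ₃}(t) + I_{ℛ₄}(t), I_{ℛ₃}(t) + I_{ℛ₄}(t), I_{ℛ₁}(t) + I_{ℛ₂}(t), I_{ℛ₁}(t) − 2I_{ℛ₃}(t), and I_{ℛ₂}(t) − 2I_{ℛ₄}(t) are all constant in time on that interval. -/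
open scoped Classical BigOperators ENNReal

noncomputable section

/-- `S = √(I_{ℛ₄} I_{ℛ₂}² I_{ℛ₃} I_{ℛ₁}²)`. -/
def RAS (I1 I2 I3 I4 : ℝ → ℝ) (t : ℝ) : ℝ :=
  Real.sqrt (I4 t * I2 t ^ 2 * I3 t * I1 t ^ 2)

/-- `(I_{ℛ₁}, I_{ℛ₂}, I_{ℛ₃}, I_{ℛ₄})` solves the averaged system (RA) on the time set `s`:
`İ_{ℛ₁} = −(12/L³)S`, `İ_{ℛ₂} = (12/L³)S`, `İ_{ℛ₃} = −(6/L³)S`, `İ_{ℛ₄} = (6/L³)S`. -/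
def IsRASolutionOn (L : ℝ) (I1 I2 I3 I4 : ℝ → ℝ) (s : Set ℝ) : Prop :=
  ∀ t ∈ s,
    HasDerivAt I1 (-(12 / L ^ 3 * RAS I1 I2 I3 I4 t)) t ∧
    HasDerivAt I2 (12 / L ^ 3 * RAS I1 I2 I3 I4 t) t ∧
    HasDerivAt I3 (-(6 / L ^ 3 * RAS I1 I2 I3 I4 t)) t ∧
    HasDerivAt I4 (6 / L ^ 3 * RAS I1 I2 I3 I4 t) t

/-! The velocity of a solution of (RA) is always a multiple of the fixed vector `(-2, 2, -1, 1)`,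
whatever the value of `S`. Hence every linear combination of `I₁, …, I₄` whose weights are
orthogonal to that vector has zero derivative, and is constant on an interval. -/

theorem IsOpen.is_const_of_hasDerivAt_zero {𝕜 G : Type*} [RCLike 𝕜] [NormedAddCommGroup G]
    [NormedSpace 𝕜 G] {f : 𝕜 → G} {s : Set 𝕜} (hs : IsOpen s) (hs' : IsPreconnected s)
    (hf : ∀ x ∈ s, HasDerivAt f 0 x) {x y : 𝕜} (hx : x ∈ s) (hy : y ∈ s) : f x = f y :=
  hs.is_const_of_deriv_eq_zero hs' (fun z hz => (hf z hz).differentiableAt.differentiableWithinAt)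
    (fun z hz => (hf z hz).deriv) hx hy

namespace IsRASolutionOn

variable {L : ℝ} {I1 I2 I3 I4 : ℝ → ℝ} {s : Set ℝ}

theorem hasDerivAt_linearCombination (hsol : IsRASolutionOn L I1 I2 I3 I4 s)
    (w₁ w₂ w₃ w₄ : ℝ) {t : ℝ} (ht : t ∈ s) :
    HasDerivAt (fun t => w₁ * I1 t + w₂ * I2 t + w₃ * I3 t + w₄ * I4 t)
      ((2 * (w₂ - w₁) + (w₄ - w₃)) * (6 / L ^ 3 * RAS I1 I2 I3 I4 t)) t := by
  obtain ⟨d₁, d₂, d₃, d₄⟩ := hsol t ht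
  exact ((((d₁.const_mul w₁).add (d₂.const_mul w₂)).add (d₃.const_mul w₃)).add
    (d₄.const_mul w₄)).congr_deriv (by ring)

theorem linearCombination_eq (hsol : IsRASolutionOn L I1 I2 I3 I4 s)
    (hs : IsOpen s) (hs' : IsPreconnected s) {w₁ w₂ w₃ w₄ : ℝ}
    (hw : 2 * (w₂ - w₁) + (w₄ - w₃) = 0) {t₁ t₂ : ℝ} (h₁ : t₁ ∈ s) (h₂ : t₂ ∈ s) :
    w₁ * I1 t₁ + w₂ * I2 t₁ + w₃ * I3 t₁ + w₄ * I4 t₁ =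
      w₁ * I1 t₂ + w₂ * I2 t₂ + w₃ * I3 t₂ + w₄ * I4 t₂ :=
  hs.is_const_of_hasDerivAt_zero hs'
    (fun t ht => by simpa [hw] using hsol.hasDerivAt_linearCombination w₁ w₂ w₃ w₄ ht) h₁ h₂

end IsRASolutionOn

theorem stmt_8_general (L : ℝ) (a b : ℝ) (I1 I2 I3 I4 : ℝ → ℝ)
    (hsol : IsRASolutionOn L I1 I2 I3 I4 (Set.Ioo a b)) :
    ∀ t₁ ∈ Set.Ioo a b, ∀ t₂ ∈ Set.Ioo a b,
      I1 t₁ + I2 t₁ + I3 t₁ + I4 t₁ = I1 t₂ + I2 t₂ + I3 t₂ + I4 t₂ ∧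
      I3 t₁ + I4 t₁ = I3 t₂ + I4 t₂ ∧
      I1 t₁ + I2 t₁ = I1 t₂ + I2 t₂ ∧
      I1 t₁ - 2 * I3 t₁ = I1 t₂ - 2 * I3 t₂ ∧
      I2 t₁ - 2 * I4 t₁ = I2 t₂ - 2 * I4 t₂ := by
  intro t₁ h₁ t₂ h₂
  have conserved {w₁ w₂ w₃ w₄ : ℝ} (hw : 2 * (w₂ - w₁) + (w₄ - w₃) = 0) :=
    hsol.linearCombination_eq isOpen_Ioo isPreconnected_Ioo hw h₁ h₂
  have sum_all := conserved (w₁ := 1) (w₂ := 1) (w₃ := 1) (w₄ := 1) (by norm_num)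
  have sum_34 := conserved (w₁ := 0) (w₂ := 0) (w₃ := 1) (w₄ := 1) (by norm_num)
  have sum_12 := conserved (w₁ := 1) (w₂ := 1) (w₃ := 0) (w₄ := 0) (by norm_num)
  have diff_13 := conserved (w₁ := 1) (w₂ := 0) (w₃ := -2) (w₄ := 0) (by norm_num)
  have diff_24 := conserved (w₁ := 0) (w₂ := 1) (w₃ := 0) (w₄ := -2) (by norm_num)
  refine ⟨?_, ?_, ?_, ?_, ?_⟩ <;> linarith

/-- Conserved quantities of the averaged system (RA). -/
theorem stmt_8 (L : ℝ) (hL : 0 < L) (a b : ℝ) (I1 I2 I3 I4 : ℝ → ℝ)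
    (hsol : IsRASolutionOn L I1 I2 I3 I4 (Set.Ioo a b))
    (hnn : ∀ t ∈ Set.Ioo a b, 0 ≤ I1 t ∧ 0 ≤ I2 t ∧ 0 ≤ I3 t ∧ 0 ≤ I4 t) :
    ∀ t₁ ∈ Set.Ioo a b, ∀ t₂ ∈ Set.Ioo a b,
      I1 t₁ + I2 t₁ + I3 t₁ + I4 t₁ = I1 t₂ + I2 t₂ + I3 t₂ + I4 t₂ ∧
      I3 t₁ + I4 t₁ = I3 t₂ + I4 t₂ ∧
      I1 t₁ + I2 t₁ = I1 t₂ + I2 t₂ ∧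
      I1 t₁ - 2 * I3 t₁ = I1 t₂ - 2 * I3 t₂ ∧
      I2 t₁ - 2 * I4 t₁ = I2 t₂ - 2 * I4 t₂ :=
  stmt_8_general L a b I1 I2 I3 I4 hsol
end
end

section
/- Let a, b > 0 and c ∈ ℝ, and define f : ℝ → ℝ by f(t) = b·sin(arctan(a b² t + c)). Then f is differentiable, |f(t)| < b for all t, and f satisfies the ordinary differential equation f′(t) = a (b − f(t))^{3/2} (b + f(t))^{3/2} for all t ∈ ℝ. -/
open Real

/-! Put `θ = arctan (a b² t + c)`, so that `cos θ > 0` and `cos² θ = 1 / (1 + (a b² t + c)²)`.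
Then `f = b sin θ`, hence `|f| < b` and `(b - f)(b + f) = (b cos θ)²`, while the chain rule gives
`f' = b cos θ · a b² cos² θ = a (b cos θ)³`. -/

theorem abs_sin_arctan_lt_one (x : ℝ) : |sin (arctan x)| < 1 := by
  rw [← sq_lt_one_iff_abs_lt_one, sin_sq]
  linarith [pow_pos (cos_arctan_pos x) 2]

theorem hasDerivAt_sin_arctan (x : ℝ) :
    HasDerivAt (fun x => sin (arctan x)) (cos (arctan x) ^ 3) x := by
  refine ((hasDerivAt_sin (arctan x)).comp x (hasDerivAt_arctan x)).congr_deriv ?_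
  rw [← cos_sq_arctan]
  ring

theorem rpow_three_halves_mul_rpow_three_halves {x y z : ℝ} (hx : 0 ≤ x) (hy : 0 ≤ y)
    (hz : 0 ≤ z) (h : x * y = z ^ 2) : x ^ ((3 : ℝ) / 2) * y ^ ((3 : ℝ) / 2) = z ^ 3 := by
  rw [← mul_rpow hx hy, h, ← rpow_natCast_mul hz, ← rpow_natCast]
  norm_num

theorem stmt_9_general (a b c : ℝ) (hb : 0 < b) (f : ℝ → ℝ)
    (hf : ∀ t, f t = b * Real.sin (Real.arctan (a * b ^ 2 * t + c))) :
    Differentiable ℝ f ∧ (∀ t, |f t| < b) ∧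
      ∀ t, HasDerivAt f (a * (b - f t) ^ ((3 : ℝ) / 2) * (b + f t) ^ ((3 : ℝ) / 2)) t := by
  obtain rfl : f = fun t => b * sin (arctan (a * b ^ 2 * t + c)) := funext hf
  have hbound : ∀ t, |b * sin (arctan (a * b ^ 2 * t + c))| < b := fun t => by
    rw [abs_mul, abs_of_pos hb]
    exact mul_lt_of_lt_one_right hb (abs_sin_arctan_lt_one _)
  have hderiv : ∀ t, HasDerivAt (fun t => b * sin (arctan (a * b ^ 2 * t + c)))
      (a * (b * cos (arctan (a * b ^ 2 * t + c))) ^ 3) t := fun t => by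
    have hlin : HasDerivAt (fun s => a * b ^ 2 * s + c) (a * b ^ 2) t := by
      simpa using ((hasDerivAt_id t).const_mul (a * b ^ 2)).add_const c
    refine (((hasDerivAt_sin_arctan _).comp t hlin).const_mul b).congr_deriv ?_
    ring
  refine ⟨fun t => (hderiv t).differentiableAt, hbound, fun t => ?_⟩
  set θ := arctan (a * b ^ 2 * t + c)
  obtain ⟨hlo, hhi⟩ := abs_lt.mp (hbound t)
  have hprod : (b - b * sin θ) * (b + b * sin θ) = (b * cos θ) ^ 2 := by
    rw [mul_pow, cos_sq']
    ring
  rw [mul_assoc, rpow_three_halves_mul_rpow_three_halves (by linarith) (by linarith)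
    (mul_nonneg hb.le (cos_arctan_pos _).le) hprod]
  exact hderiv t

/-- `f(t) = b sin(arctan(ab²t + c))` is differentiable, bounded by `b` in
absolute value, and solves `f′ = a (b − f)^{3/2} (b + f)^{3/2}`. -/
theorem stmt_9 (a b c : ℝ) (ha : 0 < a) (hb : 0 < b) (f : ℝ → ℝ)
    (hf : ∀ t, f t = b * Real.sin (Real.arctan (a * b ^ 2 * t + c))) :
    Differentiable ℝ f ∧ (∀ t, |f t| < b) ∧
      ∀ t, HasDerivAt f (a * (b - f t) ^ ((3 : ℝ) / 2) * (b + f t) ^ ((3 : ℝ) / 2)) t :=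
  stmt_9_general a b c hb f hf
end

section
/- Let L > 0 and ν > 0, define K(t) = (1/(2ν²)) sin(arctan(3ν²t/(2L³))), and define I_{ℛ₁}(t) = ν(1/2 − ν²K(t)), I_{ℛ₃}(t) = (ν/2)(1/2 − ν²K(t)), I_{ℛ₂}(t) = ν(1/2 + ν²K(t)), I_{ℛ₄}(t) = (ν/2)(1/2 + ν²K(t)). Then K satisfies K̇(t) = (6/L³)(1/2 + ν²K(t))^{3/2}(1/2 − ν²K(t))^{3/2}, the quadruple (I_{ℛ₁}, I_{ℛ₂}, I_{ℛ₃}, I_{ℛ₄}) is a global solution of the averaged system (RA) with positive components, and it satisfies I_{ℛ₁}(t) + I_{ℛ₂}(t) = ν, I_{ℛ₃}(t) + I_{ℛ₄}(t) = ν/2, I_{ℛ₁}(t) = 2I_{ℛ₃}(t), I_{ℛ₂}(t) = 2I_{ℛ₄}(t) for all t ∈ ℝ. -/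
open scoped Classical BigOperators ENNReal

noncomputable section

lemma r32 {x : ℝ} (hx : 0 < x) : x ^ ((3:ℝ)/2) = x * Real.sqrt x := by
  rw [show (3:ℝ)/2 = 1 + 1/2 by norm_num, Real.rpow_add hx, Real.rpow_one,
    Real.sqrt_eq_rpow]

/-- The explicit function `K` solves its ODE and gives a positive global
solution of the averaged system (RA) with the stated conservation identities. -/
theorem stmt_10 (L ν : ℝ) (hL : 0 < L) (hν : 0 < ν) (K I1 I2 I3 I4 : ℝ → ℝ)
    (hK : ∀ t, K t = 1 / (2 * ν ^ 2) * Real.sin (Real.arctan (3 * ν ^ 2 * t / (2 * L ^ 3))))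
    (h1 : ∀ t, I1 t = ν * (1 / 2 - ν ^ 2 * K t))
    (h3 : ∀ t, I3 t = ν / 2 * (1 / 2 - ν ^ 2 * K t))
    (h2 : ∀ t, I2 t = ν * (1 / 2 + ν ^ 2 * K t))
    (h4 : ∀ t, I4 t = ν / 2 * (1 / 2 + ν ^ 2 * K t)) :
    (∀ t, HasDerivAt K
      (6 / L ^ 3 * (1 / 2 + ν ^ 2 * K t) ^ ((3 : ℝ) / 2) *
        (1 / 2 - ν ^ 2 * K t) ^ ((3 : ℝ) / 2)) t) ∧
    IsRASolutionOn L I1 I2 I3 I4 Set.univ ∧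
    (∀ t, 0 < I1 t ∧ 0 < I2 t ∧ 0 < I3 t ∧ 0 < I4 t) ∧
    (∀ t, I1 t + I2 t = ν ∧ I3 t + I4 t = ν / 2 ∧ I1 t = 2 * I3 t ∧ I2 t = 2 * I4 t) := by
  have hν' : ν ≠ 0 := ne_of_gt hν
  have hL' : L ≠ 0 := ne_of_gt hL
  have key : ∀ t, (0 < 1 / 2 - ν ^ 2 * K t ∧ 0 < 1 / 2 + ν ^ 2 * K t) ∧
      HasDerivAt K
        (6 / L ^ 3 * (1 / 2 + ν ^ 2 * K t) ^ ((3 : ℝ) / 2) *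
          (1 / 2 - ν ^ 2 * K t) ^ ((3 : ℝ) / 2)) t := by
    intro t
    obtain ⟨u, hu⟩ : ∃ u : ℝ, 3 * ν ^ 2 * t / (2 * L ^ 3) = u := ⟨_, rfl⟩
    have hx : (0:ℝ) < 1 + u ^ 2 := by positivity
    obtain ⟨sx, hsx⟩ : ∃ s : ℝ, Real.sqrt (1 + u ^ 2) = s := ⟨_, rfl⟩
    have hsxpos : 0 < sx := hsx ▸ Real.sqrt_pos.mpr hx
    have hsx2 : sx ^ 2 = 1 + u ^ 2 := by rw [← hsx]; exact Real.sq_sqrt hx.le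
    have habs : |u| < sx := by
      have h1 : Real.sqrt (u ^ 2) < Real.sqrt (1 + u ^ 2) :=
        Real.sqrt_lt_sqrt (sq_nonneg u) (by nlinarith)
      rw [hsx] at h1
      simpa [Real.sqrt_sq_eq_abs] using h1
    have habs' := abs_lt.mp habs
    have hνK : ν ^ 2 * K t = u / (2 * sx) := by
      rw [hK, hu, Real.sin_arctan, hsx]; field_simp
    have hA : 1 / 2 - ν ^ 2 * K t = (sx - u) / (2 * sx) := by
      rw [hνK]; field_simp
    have hB : 1 / 2 + ν ^ 2 * K t = (sx + u) / (2 * sx) := by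
      rw [hνK]; field_simp
    have hApos : 0 < 1 / 2 - ν ^ 2 * K t := by
      rw [hA]; apply div_pos <;> linarith [habs'.1, habs'.2]
    have hBpos : 0 < 1 / 2 + ν ^ 2 * K t := by
      rw [hB]; apply div_pos <;> linarith [habs'.1, habs'.2]
    refine ⟨⟨hApos, hBpos⟩, ?_⟩
    have d1 : HasDerivAt (fun s : ℝ => 3 * ν ^ 2 * s / (2 * L ^ 3))
        (3 * ν ^ 2 / (2 * L ^ 3)) t := by
      simpa using ((hasDerivAt_id t).const_mul (3 * ν ^ 2)).div_const (2 * L ^ 3)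
    have d2 : HasDerivAt (fun s : ℝ => Real.sin (Real.arctan (3 * ν ^ 2 * s / (2 * L ^ 3))))
        (Real.cos (Real.arctan u) * (1 / (1 + u ^ 2) * (3 * ν ^ 2 / (2 * L ^ 3)))) t := by
      have := (Real.hasDerivAt_sin (Real.arctan (3 * ν ^ 2 * t / (2 * L ^ 3)))).comp t
        ((Real.hasDerivAt_arctan (3 * ν ^ 2 * t / (2 * L ^ 3))).comp t d1)
      rw [hu] at this
      exact this
    have d3 : HasDerivAt K
        (1 / (2 * ν ^ 2) * (Real.cos (Real.arctan u) *
          (1 / (1 + u ^ 2) * (3 * ν ^ 2 / (2 * L ^ 3))))) t := by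
      have hKf : K = fun s => 1 / (2 * ν ^ 2) *
          Real.sin (Real.arctan (3 * ν ^ 2 * s / (2 * L ^ 3))) := funext hK
      rw [hKf]; exact d2.const_mul _
    have hcos : Real.cos (Real.arctan u) = 1 / sx := by rw [Real.cos_arctan, hsx]
    rw [hcos] at d3
    have hprod : (1 / 2 + ν ^ 2 * K t) * (1 / 2 - ν ^ 2 * K t) = 1 / (4 * (1 + u ^ 2)) := by
      rw [hA, hB]
      field_simp
      linear_combination (4 * u ^ 2) * hsx2
    have hsqprod : Real.sqrt ((1 / 2 + ν ^ 2 * K t) * (1 / 2 - ν ^ 2 * K t)) = 1 / (2 * sx) := by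
      rw [hprod, show (1:ℝ) / (4 * (1 + u ^ 2)) = (1 / (2 * sx)) ^ 2 by
        rw [← hsx2]; field_simp; ring]
      exact Real.sqrt_sq (by positivity)
    have hval : 1 / (2 * ν ^ 2) * (1 / sx * (1 / (1 + u ^ 2) * (3 * ν ^ 2 / (2 * L ^ 3))))
        = 6 / L ^ 3 * (1 / 2 + ν ^ 2 * K t) ^ ((3 : ℝ) / 2) *
          (1 / 2 - ν ^ 2 * K t) ^ ((3 : ℝ) / 2) := by
      rw [r32 hBpos, r32 hApos]
      have hs : Real.sqrt (1 / 2 + ν ^ 2 * K t) * Real.sqrt (1 / 2 - ν ^ 2 * K t)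
          = 1 / (2 * sx) := by
        rw [← Real.sqrt_mul hBpos.le, hsqprod]
      calc 1 / (2 * ν ^ 2) * (1 / sx * (1 / (1 + u ^ 2) * (3 * ν ^ 2 / (2 * L ^ 3))))
          = 6 / L ^ 3 * ((1 / 2 + ν ^ 2 * K t) * (1 / 2 - ν ^ 2 * K t)) * (1 / (2 * sx)) := by
            rw [hprod]; field_simp; ring
        _ = _ := by rw [← hs]; ring
    rw [hval] at d3
    exact d3
  refine ⟨fun t => (key t).2, ?_, ?_, ?_⟩
  · intro t _
    obtain ⟨⟨hApos, hBpos⟩, hKd⟩ := key t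
    have sA2 : Real.sqrt (1 / 2 - ν ^ 2 * K t) ^ 2 = 1 / 2 - ν ^ 2 * K t := Real.sq_sqrt hApos.le
    have sB2 : Real.sqrt (1 / 2 + ν ^ 2 * K t) ^ 2 = 1 / 2 + ν ^ 2 * K t := Real.sq_sqrt hBpos.le
    have hRAS : RAS I1 I2 I3 I4 t =
        ν ^ 3 / 2 * ((1 / 2 + ν ^ 2 * K t) * Real.sqrt (1 / 2 + ν ^ 2 * K t)) *
          ((1 / 2 - ν ^ 2 * K t) * Real.sqrt (1 / 2 - ν ^ 2 * K t)) := by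
      unfold RAS
      rw [h1, h2, h3, h4,
        show ν / 2 * (1 / 2 + ν ^ 2 * K t) * (ν * (1 / 2 + ν ^ 2 * K t)) ^ 2 *
            (ν / 2 * (1 / 2 - ν ^ 2 * K t)) * (ν * (1 / 2 - ν ^ 2 * K t)) ^ 2 =
          (ν ^ 3 / 2 * ((1 / 2 + ν ^ 2 * K t) * Real.sqrt (1 / 2 + ν ^ 2 * K t)) *
            ((1 / 2 - ν ^ 2 * K t) * Real.sqrt (1 / 2 - ν ^ 2 * K t))) ^ 2 from by
          linear_combination (-(ν ^ 6 / 4) * (1 / 2 - ν ^ 2 * K t) ^ 2 * (1 / 2 + ν ^ 2 * K t) ^ 2 *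
              Real.sqrt (1 / 2 + ν ^ 2 * K t) ^ 2) * sA2 +
            (-(ν ^ 6 / 4) * (1 / 2 - ν ^ 2 * K t) ^ 3 * (1 / 2 + ν ^ 2 * K t) ^ 2) * sB2]
      exact Real.sqrt_sq (by positivity)
    have hDer : ∀ c : ℝ, HasDerivAt (fun s => c * (1 / 2 - ν ^ 2 * K s))
        (c * -(ν ^ 2 * (6 / L ^ 3 * (1 / 2 + ν ^ 2 * K t) ^ ((3 : ℝ) / 2) *
          (1 / 2 - ν ^ 2 * K t) ^ ((3 : ℝ) / 2)))) t :=
      fun c => ((hKd.const_mul (ν ^ 2)).const_sub (1 / 2)).const_mul c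
    have hDer' : ∀ c : ℝ, HasDerivAt (fun s => c * (1 / 2 + ν ^ 2 * K s))
        (c * (ν ^ 2 * (6 / L ^ 3 * (1 / 2 + ν ^ 2 * K t) ^ ((3 : ℝ) / 2) *
          (1 / 2 - ν ^ 2 * K t) ^ ((3 : ℝ) / 2)))) t :=
      fun c => ((hKd.const_mul (ν ^ 2)).const_add (1 / 2)).const_mul c
    refine ⟨?_, ?_, ?_, ?_⟩
    · rw [hRAS, show I1 = (fun s => ν * (1 / 2 - ν ^ 2 * K s)) from funext h1]
      convert hDer ν using 1
      rw [r32 hBpos, r32 hApos]; ring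
    · rw [hRAS, show I2 = (fun s => ν * (1 / 2 + ν ^ 2 * K s)) from funext h2]
      convert hDer' ν using 1
      rw [r32 hBpos, r32 hApos]; ring
    · rw [hRAS, show I3 = (fun s => ν / 2 * (1 / 2 - ν ^ 2 * K s)) from funext h3]
      convert hDer (ν / 2) using 1
      rw [r32 hBpos, r32 hApos]; ring
    · rw [hRAS, show I4 = (fun s => ν / 2 * (1 / 2 + ν ^ 2 * K s)) from funext h4]
      convert hDer' (ν / 2) using 1
      rw [r32 hBpos, r32 hApos]; ring
  · intro t
    obtain ⟨⟨hApos, hBpos⟩, -⟩ := key t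
    exact ⟨by rw [h1]; exact mul_pos hν hApos, by rw [h2]; exact mul_pos hν hBpos,
      by rw [h3]; exact mul_pos (by positivity) hApos,
      by rw [h4]; exact mul_pos (by positivity) hBpos⟩
  · intro t
    refine ⟨by rw [h1, h2]; ring, by rw [h3, h4]; ring, by rw [h1, h3]; ring,
      by rw [h2, h4]; ring⟩
end
end

section
/- There exist ε > 0 and k₀ > 0 such that the following holds for every L ∈ ℕ and every k ∈ ℕ/L with k ≥ k₀. Suppose ξ₁, ξ₂, ξ₃, ξ₄, ξ₅ ∈ ℛ and ξ₆ ∈ (2πℤ/L) \ ℛ satisfy ξ₁ + ξ₃ + ξ₅ = ξ₂ + ξ₄ + ξ₆ and |φ(ξ₁,ξ₂,ξ₃,ξ₄,ξ₅,ξ₆)| ≤ ε k². Then, writing ξ₆ = 2π(kη̃₆ + τ̃₆ + j₆/L) with η̃₆, τ̃₆, j₆ ∈ ℤ, −k/2 < τ̃₆ ≤ k/2, 0 ≤ j₆ < L, one has η̃₆ ∈ {0, 1, 3, 4} and τ̃₆ ∈ {1, −1, 2, −2}. -/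
set_option maxHeartbeats 1000000


open scoped Classical BigOperators ENNReal

noncomputable section

lemma key_comb : ∀ c₁ ∈ ({0,1,3,4} : Finset ℤ), ∀ c₂ ∈ ({0,1,3,4} : Finset ℤ),
    ∀ c₃ ∈ ({0,1,3,4} : Finset ℤ), ∀ c₄ ∈ ({0,1,3,4} : Finset ℤ),
    ∀ c₅ ∈ ({0,1,3,4} : Finset ℤ),
    (c₁+c₃+c₅-c₂-c₄)^2 = c₁^2+c₃^2+c₅^2-c₂^2-c₄^2 →
    (c₁+c₃+c₅-c₂-c₄ = 0 ∨ c₁+c₃+c₅-c₂-c₄ = 1 ∨ c₁+c₃+c₅-c₂-c₄ = 3 ∨ c₁+c₃+c₅-c₂-c₄ = 4) := by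
  decide

lemma mem_Rmset_iff (k : ℝ) (L : ℕ) (m : ℕ) (ξ : ℝ) :
    ξ ∈ Rmset k L m ↔ ∃ jn : ℕ, jn < L ∧ ξ = alph k L m (jn : ℤ) := by
  simp [Rmset]
  constructor <;> rintro ⟨a, h, e⟩ <;> exact ⟨a, h, e.symm⟩

lemma Rset_elim {k : ℝ} {L : ℕ} {ξ : ℝ} (h : ξ ∈ Rset k L) :
    ∃ (c j : ℤ), (c = 0 ∨ c = 1 ∨ c = 3 ∨ c = 4) ∧ 0 ≤ j ∧ j < (L : ℤ) ∧
      ξ = 2 * Real.pi * ((c : ℝ) * k + (j : ℝ) / (L : ℝ)) := by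
  simp only [Rset, Finset.mem_union, mem_Rmset_iff] at h
  rcases h with ((⟨j, hj, rfl⟩ | ⟨j, hj, rfl⟩) | ⟨j, hj, rfl⟩) | ⟨j, hj, rfl⟩
  · exact ⟨3, j, by norm_num, by positivity, by exact_mod_cast hj, by simp only [alph]; push_cast; ring⟩
  · exact ⟨1, j, by norm_num, by positivity, by exact_mod_cast hj, by simp only [alph]; push_cast; ring⟩
  · exact ⟨0, j, by norm_num, by positivity, by exact_mod_cast hj, by simp only [alph]; push_cast; ring⟩
  · exact ⟨4, j, by norm_num, by positivity, by exact_mod_cast hj, by simp only [alph]; push_cast; ring⟩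

lemma Rset_intro {k : ℝ} {L : ℕ} {c j : ℤ} (hc : c = 0 ∨ c = 1 ∨ c = 3 ∨ c = 4)
    (hj0 : 0 ≤ j) (hjL : j < (L : ℤ)) :
    2 * Real.pi * ((c : ℝ) * k + (j : ℝ) / (L : ℝ)) ∈ Rset k L := by
  obtain ⟨jn, rfl, hjnL⟩ : ∃ jn : ℕ, (jn : ℤ) = j ∧ jn < L :=
    ⟨j.toNat, Int.toNat_of_nonneg hj0, by omega⟩
  simp only [Rset, Finset.mem_union, mem_Rmset_iff]
  rcases hc with rfl | rfl | rfl | rfl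
  · exact Or.inl (Or.inr ⟨jn, hjnL, by simp only [alph]; push_cast; ring⟩)
  · exact Or.inl (Or.inl (Or.inr ⟨jn, hjnL, by simp only [alph]; push_cast; ring⟩))
  · exact Or.inl (Or.inl (Or.inl ⟨jn, hjnL, by simp only [alph]; push_cast; ring⟩))
  · exact Or.inr ⟨jn, hjnL, by simp only [alph]; push_cast; ring⟩

lemma Abound {A B C k p : ℝ} (hp9 : 9 < p) (hp10 : p < 10) (hk : 100000 ≤ k)
    (hB1 : -200 ≤ B) (hB2 : B ≤ 200) (hC1 : -20 ≤ C) (hC2 : C ≤ 20)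
    (hlo : -(1*k^2) ≤ 4*p*(A*k^2+2*B*k+C)) (hhi : 4*p*(A*k^2+2*B*k+C) ≤ 1*k^2) :
    -1 < A ∧ A < 1 := by
  have hk0 : (0:ℝ) < k := by linarith
  have hpk : (0:ℝ) ≤ p*k := by positivity
  have P2 : (0:ℝ) ≤ (C+20)*p := mul_nonneg (by linarith) (by linarith)
  have P2' : (0:ℝ) ≤ (20-C)*p := mul_nonneg (by linarith) (by linarith)
  have P1 : (0:ℝ) ≤ (B+200)*(p*k) := mul_nonneg (by linarith) hpk
  have P1' : (0:ℝ) ≤ (200-B)*(p*k) := mul_nonneg (by linarith) hpk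
  have P3 : (0:ℝ) ≤ (p-9)*k^2 := mul_nonneg (by linarith) (sq_nonneg k)
  have P4 : (0:ℝ) ≤ (10-p)*k := mul_nonneg (by linarith) hk0.le
  have P5 : (0:ℝ) ≤ (k-100000)*k := mul_nonneg (by linarith) hk0.le
  constructor
  · by_contra hcon
    push_neg at hcon
    have P6 : (0:ℝ) ≤ (-1-A)*(p*k^2) := mul_nonneg (by linarith) (by positivity)
    linarith [P1', P2', P3, P4, P5, P6, hlo]
  · by_contra hcon
    push_neg at hcon
    have P6 : (0:ℝ) ≤ (A-1)*(p*k^2) := mul_nonneg (by linarith) (by positivity)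
    linarith [P1, P2, P3, P4, P5, P6, hhi]

/-- Lemma 5.3. If `ξ₁,…,ξ₅ ∈ ℛ`, `ξ₆ ∈ (2πℤ/L) \ ℛ` lie on the
resonance hyperplane and `|φ| ≤ ε k²`, then `ξ₆ = 2π(kη̃₆ + τ̃₆ + j₆/L)` with
`η̃₆ ∈ {0,1,3,4}` and `τ̃₆ ∈ {±1, ±2}`. -/
theorem stmt_16 :
    ∃ ε k₀ : ℝ, 0 < ε ∧ 0 < k₀ ∧
      ∀ (L : ℕ) (k : ℝ), 0 < L → (∃ K : ℕ, (K : ℝ) = (L : ℝ) * k) → k₀ ≤ k →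
        ∀ ξ₁ ξ₂ ξ₃ ξ₄ ξ₅ ξ₆ : ℝ,
          ξ₁ ∈ Rset k L → ξ₂ ∈ Rset k L → ξ₃ ∈ Rset k L → ξ₄ ∈ Rset k L →
          ξ₅ ∈ Rset k L → (∃ n : ℤ, ξ₆ = 2 * Real.pi * (n : ℝ) / (L : ℝ)) →
          ξ₆ ∉ Rset k L →
          ξ₁ + ξ₃ + ξ₅ = ξ₂ + ξ₄ + ξ₆ →
          |phi6 ξ₁ ξ₂ ξ₃ ξ₄ ξ₅ ξ₆| ≤ ε * k ^ 2 →
          ∃ η τ j : ℤ,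
            ξ₆ = 2 * Real.pi * (k * (η : ℝ) + (τ : ℝ) + (j : ℝ) / (L : ℝ)) ∧
            -(k / 2) < (τ : ℝ) ∧ (τ : ℝ) ≤ k / 2 ∧ 0 ≤ j ∧ j < (L : ℤ) ∧
            (η = 0 ∨ η = 1 ∨ η = 3 ∨ η = 4) ∧
            (τ = 1 ∨ τ = -1 ∨ τ = 2 ∨ τ = -2) := by
  refine ⟨1, 100000, one_pos, by norm_num, ?_⟩
  intro L k hL _hK hk ξ₁ ξ₂ ξ₃ ξ₄ ξ₅ ξ₆ h1 h2 h3 h4 h5 _h6 h6' hsum hφ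
  obtain ⟨c₁, j₁, hc₁, hj₁0, hj₁L, hξ₁⟩ := Rset_elim h1
  obtain ⟨c₂, j₂, hc₂, hj₂0, hj₂L, hξ₂⟩ := Rset_elim h2
  obtain ⟨c₃, j₃, hc₃, hj₃0, hj₃L, hξ₃⟩ := Rset_elim h3
  obtain ⟨c₄, j₄, hc₄, hj₄0, hj₄L, hξ₄⟩ := Rset_elim h4
  obtain ⟨c₅, j₅, hc₅, hj₅0, hj₅L, hξ₅⟩ := Rset_elim h5
  have hLpos : (0:ℝ) < (L:ℝ) := by exact_mod_cast hL
  have hL0 : (L:ℝ) ≠ 0 := ne_of_gt hLpos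
  have hπ : (0:ℝ) < Real.pi := Real.pi_pos
  have hkpos : (0:ℝ) < k := by linarith
  -- real bounds on the c's
  have hc1r : (0:ℝ) ≤ (c₁:ℝ) ∧ (c₁:ℝ) ≤ 4 := by rcases hc₁ with rfl|rfl|rfl|rfl <;> norm_num
  have hc2r : (0:ℝ) ≤ (c₂:ℝ) ∧ (c₂:ℝ) ≤ 4 := by rcases hc₂ with rfl|rfl|rfl|rfl <;> norm_num
  have hc3r : (0:ℝ) ≤ (c₃:ℝ) ∧ (c₃:ℝ) ≤ 4 := by rcases hc₃ with rfl|rfl|rfl|rfl <;> norm_num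
  have hc4r : (0:ℝ) ≤ (c₄:ℝ) ∧ (c₄:ℝ) ≤ 4 := by rcases hc₄ with rfl|rfl|rfl|rfl <;> norm_num
  have hc5r : (0:ℝ) ≤ (c₅:ℝ) ∧ (c₅:ℝ) ≤ 4 := by rcases hc₅ with rfl|rfl|rfl|rfl <;> norm_num
  have hm₁ : c₁ ∈ ({0,1,3,4} : Finset ℤ) := by rcases hc₁ with rfl|rfl|rfl|rfl <;> decide
  have hm₂ : c₂ ∈ ({0,1,3,4} : Finset ℤ) := by rcases hc₂ with rfl|rfl|rfl|rfl <;> decide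
  have hm₃ : c₃ ∈ ({0,1,3,4} : Finset ℤ) := by rcases hc₃ with rfl|rfl|rfl|rfl <;> decide
  have hm₄ : c₄ ∈ ({0,1,3,4} : Finset ℤ) := by rcases hc₄ with rfl|rfl|rfl|rfl <;> decide
  have hm₅ : c₅ ∈ ({0,1,3,4} : Finset ℤ) := by rcases hc₅ with rfl|rfl|rfl|rfl <;> decide
  have hb₁ : (0:ℤ) ≤ c₁ ∧ c₁ ≤ 4 := by rcases hc₁ with rfl|rfl|rfl|rfl <;> omega
  have hb₂ : (0:ℤ) ≤ c₂ ∧ c₂ ≤ 4 := by rcases hc₂ with rfl|rfl|rfl|rfl <;> omega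
  have hb₃ : (0:ℤ) ≤ c₃ ∧ c₃ ≤ 4 := by rcases hc₃ with rfl|rfl|rfl|rfl <;> omega
  have hb₄ : (0:ℤ) ≤ c₄ ∧ c₄ ≤ 4 := by rcases hc₄ with rfl|rfl|rfl|rfl <;> omega
  have hb₅ : (0:ℤ) ≤ c₅ ∧ c₅ ≤ 4 := by rcases hc₅ with rfl|rfl|rfl|rfl <;> omega
  have hSbZ : (-8:ℤ) ≤ c₁+c₃+c₅-c₂-c₄ ∧ c₁+c₃+c₅-c₂-c₄ ≤ 12 := by omega
  set S : ℤ := c₁ + c₃ + c₅ - c₂ - c₄ with hS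
  set n : ℤ := j₁ + j₃ + j₅ - j₂ - j₄ with hn
  have hSlb : (-8:ℝ) ≤ (S:ℝ) := by exact_mod_cast hSbZ.1
  have hSub : (S:ℝ) ≤ 12 := by exact_mod_cast hSbZ.2
  have hξ₆ : ξ₆ = 2 * Real.pi * ((S:ℝ) * k + (n:ℝ) / (L:ℝ)) := by
    have h : ξ₆ = ξ₁ + ξ₃ + ξ₅ - ξ₂ - ξ₄ := by linarith
    rw [h, hξ₁, hξ₂, hξ₃, hξ₄, hξ₅, hS, hn]
    push_cast
    ring
  set t1 : ℝ := (j₁:ℝ)/(L:ℝ) with ht1d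
  set t2 : ℝ := (j₂:ℝ)/(L:ℝ) with ht2d
  set t3 : ℝ := (j₃:ℝ)/(L:ℝ) with ht3d
  set t4 : ℝ := (j₄:ℝ)/(L:ℝ) with ht4d
  set t5 : ℝ := (j₅:ℝ)/(L:ℝ) with ht5d
  set t6 : ℝ := (n:ℝ)/(L:ℝ) with ht6d
  have ht6eq : t6 = t1 + t3 + t5 - t2 - t4 := by
    simp only [ht6d, ht1d, ht2d, ht3d, ht4d, ht5d, hn]
    push_cast
    ring
  have ht10 : 0 ≤ t1 := by rw [ht1d]; positivity
  have ht20 : 0 ≤ t2 := by rw [ht2d]; positivity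
  have ht30 : 0 ≤ t3 := by rw [ht3d]; positivity
  have ht40 : 0 ≤ t4 := by rw [ht4d]; positivity
  have ht50 : 0 ≤ t5 := by rw [ht5d]; positivity
  have ht11 : t1 < 1 := by rw [ht1d]; exact (div_lt_one hLpos).mpr (by exact_mod_cast hj₁L)
  have ht21 : t2 < 1 := by rw [ht2d]; exact (div_lt_one hLpos).mpr (by exact_mod_cast hj₂L)
  have ht31 : t3 < 1 := by rw [ht3d]; exact (div_lt_one hLpos).mpr (by exact_mod_cast hj₃L)
  have ht41 : t4 < 1 := by rw [ht4d]; exact (div_lt_one hLpos).mpr (by exact_mod_cast hj₄L)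
  have ht51 : t5 < 1 := by rw [ht5d]; exact (div_lt_one hLpos).mpr (by exact_mod_cast hj₅L)
  have ht6lb : (-2:ℝ) < t6 := by rw [ht6eq]; linarith
  have ht6ub : t6 < 3 := by rw [ht6eq]; linarith
  set BB : ℝ := (c₁:ℝ)*t1+(c₃:ℝ)*t3+(c₅:ℝ)*t5-(c₂:ℝ)*t2-(c₄:ℝ)*t4-(S:ℝ)*t6 with hBBd
  set CC : ℝ := t1^2+t3^2+t5^2-t2^2-t4^2-t6^2 with hCCd
  have hp1u : (c₁:ℝ)*t1 ≤ 4 := by have h := mul_le_mul hc1r.2 (le_of_lt ht11) ht10 (by norm_num : (0:ℝ) ≤ 4); linarith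
  have hp2u : (c₂:ℝ)*t2 ≤ 4 := by have h := mul_le_mul hc2r.2 (le_of_lt ht21) ht20 (by norm_num : (0:ℝ) ≤ 4); linarith
  have hp3u : (c₃:ℝ)*t3 ≤ 4 := by have h := mul_le_mul hc3r.2 (le_of_lt ht31) ht30 (by norm_num : (0:ℝ) ≤ 4); linarith
  have hp4u : (c₄:ℝ)*t4 ≤ 4 := by have h := mul_le_mul hc4r.2 (le_of_lt ht41) ht40 (by norm_num : (0:ℝ) ≤ 4); linarith
  have hp5u : (c₅:ℝ)*t5 ≤ 4 := by have h := mul_le_mul hc5r.2 (le_of_lt ht51) ht50 (by norm_num : (0:ℝ) ≤ 4); linarith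
  have hp1l : (0:ℝ) ≤ (c₁:ℝ)*t1 := mul_nonneg hc1r.1 ht10
  have hp2l : (0:ℝ) ≤ (c₂:ℝ)*t2 := mul_nonneg hc2r.1 ht20
  have hp3l : (0:ℝ) ≤ (c₃:ℝ)*t3 := mul_nonneg hc3r.1 ht30
  have hp4l : (0:ℝ) ≤ (c₄:ℝ)*t4 := mul_nonneg hc4r.1 ht40
  have hp5l : (0:ℝ) ≤ (c₅:ℝ)*t5 := mul_nonneg hc5r.1 ht50
  have hSt6u : (S:ℝ)*t6 ≤ 76 := by
    have h := mul_nonneg (by linarith : (0:ℝ) ≤ 12 - (S:ℝ)) (by linarith : (0:ℝ) ≤ t6 + 2)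
    linarith [h]
  have hSt6l : (-64:ℝ) ≤ (S:ℝ)*t6 := by
    have h := mul_nonneg (by linarith : (0:ℝ) ≤ (S:ℝ) + 8) (by linarith : (0:ℝ) ≤ t6 + 2)
    linarith [h]
  have hBub : BB ≤ 200 := by rw [hBBd]; linarith
  have hBlb : (-200:ℝ) ≤ BB := by rw [hBBd]; linarith
  have hsq1 : t1^2 ≤ 1^2 := sq_le_sq' (by linarith) (by linarith)
  have hsq2 : t2^2 ≤ 1^2 := sq_le_sq' (by linarith) (by linarith)
  have hsq3 : t3^2 ≤ 1^2 := sq_le_sq' (by linarith) (by linarith)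
  have hsq4 : t4^2 ≤ 1^2 := sq_le_sq' (by linarith) (by linarith)
  have hsq5 : t5^2 ≤ 1^2 := sq_le_sq' (by linarith) (by linarith)
  have hsq6 : t6^2 ≤ 3^2 := sq_le_sq' (by linarith) (by linarith)
  have hCub : CC ≤ 20 := by
    rw [hCCd]; linarith [sq_nonneg t2, sq_nonneg t4, sq_nonneg t6]
  have hClb : (-20:ℝ) ≤ CC := by
    rw [hCCd]; linarith [sq_nonneg t1, sq_nonneg t3, sq_nonneg t5]
  set A : ℤ := c₁^2+c₃^2+c₅^2-c₂^2-c₄^2-S^2 with hA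
  have key : phi6 ξ₁ ξ₂ ξ₃ ξ₄ ξ₅ ξ₆ =
      4*Real.pi^2 * ((A:ℝ)*k^2 + 2*BB*k + CC) := by
    simp only [phi6, hξ₁, hξ₂, hξ₃, hξ₄, hξ₅, hξ₆, hBBd, hCCd, hA, hS]
    push_cast
    ring
  rw [key] at hφ
  obtain ⟨hlo, hhi⟩ := abs_le.mp hφ
  have hπ2l : (9:ℝ) < Real.pi^2 := by
    have h := sq_lt_sq' (by linarith : -Real.pi < 3) Real.pi_gt_three
    norm_num at h
    linarith
  have hπ2u : Real.pi^2 < 10 := by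
    have h := sq_lt_sq' (by linarith : -(3.15:ℝ) < Real.pi) Real.pi_lt_d2
    norm_num at h
    linarith
  have hAb := Abound hπ2l hπ2u hk hBlb hBub hClb hCub hlo hhi
  have hA1 : ((A:ℤ):ℝ) < 1 := hAb.2
  have hA2 : (-1:ℝ) < ((A:ℤ):ℝ) := hAb.1
  have hAz : A = 0 := by
    have h1 : (-1:ℤ) < A := by exact_mod_cast hA2
    have h2 : A < 1 := by exact_mod_cast hA1
    omega
  have hsq : (c₁+c₃+c₅-c₂-c₄)^2 = c₁^2+c₃^2+c₅^2-c₂^2-c₄^2 := by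
    have h := hA.symm.trans hAz
    rw [hS] at h
    linarith
  have hSmem0 := key_comb c₁ hm₁ c₂ hm₂ c₃ hm₃ c₄ hm₄ c₅ hm₅ hsq
  rw [← hS] at hSmem0
  -- decompose n
  have hLz : (L:ℤ) ≠ 0 := by exact_mod_cast hL.ne'
  obtain ⟨q, j, hdm, hj0, hjL⟩ :
      ∃ q j : ℤ, (L:ℤ)*q + j = n ∧ 0 ≤ j ∧ j < (L:ℤ) :=
    ⟨n / (L:ℤ), n % (L:ℤ), Int.mul_ediv_add_emod n L, Int.emod_nonneg n hLz,
      Int.emod_lt_of_pos n (by exact_mod_cast hL)⟩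
  have hLZpos : (0:ℤ) < (L:ℤ) := by exact_mod_cast hL
  have hnub : n ≤ 3*(L:ℤ) - 3 := by omega
  have hnlb : -2*(L:ℤ) + 2 ≤ n := by omega
  have hqub : q < 3 := by
    have h1 : (L:ℤ)*q < (L:ℤ)*3 := by linarith
    exact lt_of_mul_lt_mul_left h1 (le_of_lt hLZpos)
  have hqlb : (-3:ℤ) < q := by
    have h1 : (L:ℤ)*(-3) < (L:ℤ)*q := by linarith
    exact lt_of_mul_lt_mul_left h1 (le_of_lt hLZpos)
  have hqne : q ≠ 0 := by
    intro h0
    apply h6'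
    rw [h0] at hdm
    have hnj : n = j := by simpa using hdm.symm
    rw [hξ₆, ht6d, hnj]
    exact Rset_intro hSmem0 hj0 hjL
  refine ⟨S, q, j, ?_, ?_, ?_, hj0, hjL, hSmem0, by omega⟩
  · rw [hξ₆, ht6d]
    have hnr : (n:ℝ) = (L:ℝ)*(q:ℝ) + (j:ℝ) := by exact_mod_cast hdm.symm
    rw [hnr]
    field_simp
    ring
  · have : (-2:ℝ) ≤ (q:ℝ) := by exact_mod_cast (by omega : (-2:ℤ) ≤ q)
    linarith
  · have : (q:ℝ) ≤ 2 := by exact_mod_cast (by omega : q ≤ (2:ℤ))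
    linarith
end
end
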